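/- arXiv:1908.08915 — 4 statements merged into one kernel-verified Lean document; each statement's English description precedes it below -/
import Mathlib

section
/- (Beesack–Das Opial-type inequality, left boundary condition) Let l, m be real numbers with l > 0, m > 0, l + m > 1, let −∞ < a < b < ∞, and let p, q be non-negative measurable functions on (a, b) with ∫_a^b p(t)^{−1/(l+m−1)} dt < ∞. For a ≤ y ≤ b set K(y) := (m/(l+m))^{m/(l+m)} [∫_a^y q(t)^{(l+m)/l} p(t)^{−m/l} (∫_a^t p(s)^{−1/(l+m−1)} ds)^{l+m−1} dt]^{l/(l+m)} and assume K(y) < ∞. If u is absolutely continuous on [a, y] and u(a) = 0, then ∫_a^y q(t)|u(t)|^l |u'(t)|^m dt ≤ K(y) ∫_a^y p(t)|u'(t)|^{l+m} dt. -/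
open MeasureTheory Set Filter
open scoped ENNReal

/-- `u` is absolutely continuous on `[s,t]` with a.e. derivative `u'`:
`u'` is integrable on `[s,t]` and the fundamental theorem of calculus holds. -/
def ACOn (u u' : ℝ → ℝ) (s t : ℝ) : Prop :=
  MeasureTheory.IntegrableOn u' (Set.Icc s t) ∧
    ∀ x ∈ Set.Icc s t, u x = u s + ∫ σ in s..x, u' σ

/-- The Beesack–Das constant
`K(y) = (m/(l+m))^{m/(l+m)} [∫_a^y q^{(l+m)/l} p^{-m/l} (∫_a^t p^{-1/(l+m-1)})^{l+m-1} dt]^{l/(l+m)}`. -/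
noncomputable def opialK (l m : ℝ) (q p : ℝ → ℝ) (a y : ℝ) : ℝ≥0∞ :=
  ENNReal.ofReal ((m / (l + m)) ^ (m / (l + m))) *
    (∫⁻ t in Set.Ioc a y,
      ENNReal.ofReal (q t) ^ ((l + m) / l) * ENNReal.ofReal (p t) ^ (-(m / l)) *
        (∫⁻ s in Set.Ioc a t, ENNReal.ofReal (p s) ^ (-(1 / (l + m - 1)))) ^ (l + m - 1)) ^
      (l / (l + m))

/-!
Write `r = l + m`, `P(t) = ∫_a^t p^{-1/(r-1)}` and `z(t) = ∫_a^t p |u'|^r`. Hölder's inequality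
with weight `p` gives `|u(t)| ≤ ∫_a^t |u'| ≤ z(t)^{1/r} P(t)^{(r-1)/r}`, hence
`q |u|^l |u'|^m ≤ (q^{r/l} p^{-m/l} P^{r-1})^{l/r} (z^{l/m} z')^{m/r}` since `z' = p |u'|^r`.
Hölder's inequality with exponents `r/l` and `r/m` then reduces the claim to
`∫_a^y z^{l/m} z' ≤ (m/r) z(y)^{r/m}`, which follows from the change of variables `v = z(t)`
for the nondecreasing, a.e. differentiable function `z`.
-/

theorem IntervalIntegrable.exists_ae_eq_Ioc_hasDerivAt_integral {h : ℝ → ℝ} {a y : ℝ}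
    (hh : IntervalIntegrable h volume a y) :
    ∃ s ⊆ Ioc a y, MeasurableSet s ∧ s =ᵐ[volume] Ioc a y ∧
      ∀ x ∈ s, HasDerivAt (fun t => ∫ τ in a..t, h τ) (h x) x := by
  set N := toMeasurable volume {x | x ∈ uIcc a y → ∀ c ∈ uIcc a y,
    HasDerivAt (fun t => ∫ τ in c..t, h τ) (h x) x}ᶜ
  have hN : volume N = 0 := by
    rw [measure_toMeasurable]; exact hh.ae_hasDerivAt_integral
  refine ⟨Ioc a y \ N, sdiff_subset, measurableSet_Ioc.diff (measurableSet_toMeasurable _ _),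
    sdiff_null_ae_eq_self hN, fun x hx => ?_⟩
  have hx' := not_not.1 (fun h' => hx.2 (subset_toMeasurable _ _ h'))
  exact hx' (Ioc_subset_Icc_self.trans Icc_subset_uIcc hx.1) a left_mem_uIcc

theorem setLIntegral_Icc_zero_ofReal_rpow {c x : ℝ} (hc : 0 ≤ c) (hx : 0 ≤ x) :
    ∫⁻ v in Icc 0 x, ENNReal.ofReal v ^ c = ENNReal.ofReal (x ^ (c + 1) / (c + 1)) := by
  have hint : IntegrableOn (fun v : ℝ => v ^ c) (Icc 0 x) :=
    (continuousOn_id.rpow_const fun _ _ => Or.inr hc).integrableOn_compact isCompact_Icc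
  rw [setLIntegral_congr_fun measurableSet_Icc fun v hv => ENNReal.ofReal_rpow_of_nonneg hv.1 hc,
    ← ofReal_integral_eq_lintegral_ofReal hint
      ((ae_restrict_mem measurableSet_Icc).mono fun v hv => Real.rpow_nonneg hv.1 c),
    integral_Icc_eq_integral_Ioc, ← intervalIntegral.integral_of_le hx,
    integral_rpow (Or.inl (by linarith)), Real.zero_rpow (by linarith), sub_zero]

theorem setLIntegral_ofReal_primitive_rpow_mul_le {h : ℝ → ℝ} {a y c : ℝ}
    (hh : IntervalIntegrable h volume a y) (h0 : ∀ x, 0 ≤ h x) (hc : 0 ≤ c) (hay : a ≤ y) :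
    ∫⁻ t in Ioc a y, ENNReal.ofReal (∫ τ in a..t, h τ) ^ c * ENNReal.ofReal (h t) ≤
      ENNReal.ofReal ((∫ τ in a..y, h τ) ^ (c + 1) / (c + 1)) := by
  set Z := fun t => ∫ τ in a..t, h τ
  have hZ : MonotoneOn Z (Icc a y) := fun s hs t ht hst =>
    intervalIntegral.integral_mono_interval le_rfl hs.1 hst (ae_of_all _ fun x => h0 x)
      (hh.mono_set (uIcc_subset_uIcc left_mem_uIcc (Icc_subset_uIcc ht)))
  have hZ0 : ∀ x ∈ Icc a y, 0 ≤ Z x := fun x hx =>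
    intervalIntegral.integral_nonneg hx.1 fun τ _ => h0 τ
  obtain ⟨s, hsI, hs, hsae, hderiv⟩ := hh.exists_ae_eq_Ioc_hasDerivAt_integral
  have hZs : Z '' s ⊆ Icc 0 (Z y) := by
    rintro _ ⟨x, hx, rfl⟩
    have hx' := Ioc_subset_Icc_self (hsI hx)
    exact ⟨hZ0 x hx', hZ hx' (right_mem_Icc.2 hay) hx'.2⟩
  calc ∫⁻ t in Ioc a y, ENNReal.ofReal (Z t) ^ c * ENNReal.ofReal (h t)
      = ∫⁻ t in s, ENNReal.ofReal (h t) * ENNReal.ofReal (Z t) ^ c := by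
        rw [setLIntegral_congr hsae.symm]; simp_rw [mul_comm]
    _ = ∫⁻ v in Z '' s, ENNReal.ofReal v ^ c :=
        (lintegral_image_eq_lintegral_deriv_mul_of_monotoneOn hs
          (fun x hx => (hderiv x hx).hasDerivWithinAt)
          (hZ.mono (hsI.trans Ioc_subset_Icc_self)) (fun v => ENNReal.ofReal v ^ c)).symm
    _ ≤ ∫⁻ v in Icc 0 (Z y), ENNReal.ofReal v ^ c := lintegral_mono_set hZs
    _ = ENNReal.ofReal (Z y ^ (c + 1) / (c + 1)) :=
        setLIntegral_Icc_zero_ofReal_rpow hc (hZ0 y (right_mem_Icc.2 hay))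

theorem setLIntegral_primitive_rpow_mul_le {g : ℝ → ℝ≥0∞} {a y c : ℝ}
    (hg : AEMeasurable g (volume.restrict (Ioc a y))) (hc : 0 ≤ c) :
    ∫⁻ t in Ioc a y, (∫⁻ s in Ioc a t, g s) ^ c * g t ≤
      ENNReal.ofReal (1 / (c + 1)) * (∫⁻ s in Ioc a y, g s) ^ (c + 1) := by
  rcases lt_or_ge y a with hya | hay
  · simp [Ioc_eq_empty hya.not_gt]
  by_cases htop : ∫⁻ s in Ioc a y, g s = ⊤
  · rw [htop, ENNReal.top_rpow_of_pos (by linarith),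
      ENNReal.mul_top (ENNReal.ofReal_pos.2 (by positivity)).ne']
    exact le_top
  have hfin : ∀ᵐ x ∂volume.restrict (Ioc a y), g x < ⊤ := ae_lt_top' hg htop
  set h := fun x => (g x).toReal
  have hh : IntervalIntegrable h volume a y :=
    (intervalIntegrable_iff_integrableOn_Ioc_of_le hay).2
      (integrable_toReal_of_lintegral_ne_top hg htop)
  have hprim : ∀ t ∈ Icc a y, ENNReal.ofReal (∫ τ in a..t, h τ) = ∫⁻ s in Ioc a t, g s := by
    intro t ht
    have hsub : Ioc a t ⊆ Ioc a y := Ioc_subset_Ioc_right ht.2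
    rw [intervalIntegral.integral_of_le ht.1,
      integral_toReal (hg.mono_measure (Measure.restrict_mono hsub le_rfl))
        (ae_restrict_of_ae_restrict_of_subset hsub hfin),
      ENNReal.ofReal_toReal (ne_top_of_le_ne_top htop (lintegral_mono_set hsub))]
  calc ∫⁻ t in Ioc a y, (∫⁻ s in Ioc a t, g s) ^ c * g t
      = ∫⁻ t in Ioc a y, ENNReal.ofReal (∫ τ in a..t, h τ) ^ c * ENNReal.ofReal (h t) := by
        refine setLIntegral_congr_fun_ae measurableSet_Ioc ?_
        filter_upwards [ae_imp_of_ae_restrict hfin] with t hgt ht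
        rw [hprim t (Ioc_subset_Icc_self ht), ENNReal.ofReal_toReal (hgt ht).ne]
    _ ≤ ENNReal.ofReal ((∫ τ in a..y, h τ) ^ (c + 1) / (c + 1)) :=
        setLIntegral_ofReal_primitive_rpow_mul_le hh (fun _ => ENNReal.toReal_nonneg) hc hay
    _ = ENNReal.ofReal (1 / (c + 1)) * (∫⁻ s in Ioc a y, g s) ^ (c + 1) := by
        rw [← hprim y (right_mem_Icc.2 hay), ENNReal.ofReal_rpow_of_nonneg
          (intervalIntegral.integral_nonneg hay fun _ _ => ENNReal.toReal_nonneg) (by linarith),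
          ← ENNReal.ofReal_mul (by positivity), one_div_mul_eq_div]

theorem lintegral_le_weighted_rpow_mul {α : Type*} [MeasurableSpace α] {μ : Measure α} {r : ℝ}
    (hr : 1 < r) {f w : α → ℝ≥0∞} (hf : AEMeasurable f μ) (hw : AEMeasurable w μ)
    (hw0 : ∀ᵐ x ∂μ, w x ≠ 0) (hwtop : ∀ᵐ x ∂μ, w x ≠ ⊤) :
    ∫⁻ x, f x ∂μ ≤
      (∫⁻ x, w x * f x ^ r ∂μ) ^ (1 / r) * (∫⁻ x, w x ^ (-(1 / (r - 1))) ∂μ) ^ ((r - 1) / r) := by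
  have hr0 : 0 < r := by linarith
  calc ∫⁻ x, f x ∂μ
      = ∫⁻ x, (w x * f x ^ r) ^ (1 / r) * (w x ^ (-(1 / (r - 1)))) ^ ((r - 1) / r) ∂μ := by
        refine lintegral_congr_ae ?_
        filter_upwards [hw0, hwtop] with x hx0 hxtop
        have hexp : -(1 / (r - 1)) * ((r - 1) / r) = -(1 / r) := by
          field_simp [(by linarith : r - 1 ≠ 0)]
        rw [ENNReal.mul_rpow_of_nonneg _ _ (by positivity), ← ENNReal.rpow_mul, ← ENNReal.rpow_mul,
          hexp, mul_one_div_cancel hr0.ne', ENNReal.rpow_one, mul_right_comm,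
          ← ENNReal.rpow_add _ _ hx0 hxtop, add_neg_cancel, ENNReal.rpow_zero, one_mul]
    _ ≤ _ := ENNReal.lintegral_mul_norm_pow_le (hw.mul (hf.pow_const r)) (hw.pow_const _)
        (by positivity) (div_nonneg (by linarith) hr0.le) (by field_simp; ring)

theorem setLIntegral_opial_le {l m a y : ℝ} (hl : 0 < l) (hm : 0 < m) (hlm : 1 < l + m)
    {Q G U V : ℝ → ℝ≥0∞} (hQ : AEMeasurable Q (volume.restrict (Ioc a y)))
    (hG : AEMeasurable G (volume.restrict (Ioc a y)))
    (hV : AEMeasurable V (volume.restrict (Ioc a y)))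
    (hG0 : ∀ᵐ t ∂volume.restrict (Ioc a y), G t ≠ 0)
    (hGtop : ∀ᵐ t ∂volume.restrict (Ioc a y), G t ≠ ⊤)
    (hU : ∀ t ∈ Ioc a y, U t ≤ ∫⁻ s in Ioc a t, V s) :
    ∫⁻ t in Ioc a y, Q t * U t ^ l * V t ^ m ≤
      ENNReal.ofReal ((m / (l + m)) ^ (m / (l + m))) *
        (∫⁻ t in Ioc a y, Q t ^ ((l + m) / l) * G t ^ (-(m / l)) *
          (∫⁻ s in Ioc a t, G s ^ (-(1 / (l + m - 1)))) ^ (l + m - 1)) ^ (l / (l + m)) *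
        ∫⁻ t in Ioc a y, G t * V t ^ (l + m) := by
  set r := l + m with hr
  have hr0 : 0 < r := by linarith
  set P := fun t => ∫⁻ s in Ioc a t, G s ^ (-(1 / (r - 1)))
  set g := fun t => G t * V t ^ r
  set z := fun t => ∫⁻ s in Ioc a t, g s
  have hg : AEMeasurable g (volume.restrict (Ioc a y)) := hG.mul (hV.pow_const r)
  have hPmono : Monotone P := fun _ _ hst => lintegral_mono_set (Ioc_subset_Ioc_right hst)
  have hzmono : Monotone z := fun _ _ hst => lintegral_mono_set (Ioc_subset_Ioc_right hst)
  have hUz : ∀ t ∈ Ioc a y, U t ≤ z t ^ (1 / r) * P t ^ ((r - 1) / r) := by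
    intro t ht
    have hsub : Ioc a t ⊆ Ioc a y := Ioc_subset_Ioc_right ht.2
    have hμ : volume.restrict (Ioc a t) ≤ volume.restrict (Ioc a y) :=
      Measure.restrict_mono hsub le_rfl
    exact (hU t ht).trans (lintegral_le_weighted_rpow_mul hlm (hV.mono_measure hμ)
      (hG.mono_measure hμ) (ae_restrict_of_ae_restrict_of_subset hsub hG0)
      (ae_restrict_of_ae_restrict_of_subset hsub hGtop))
  set A := fun t => Q t ^ (r / l) * G t ^ (-(m / l)) * P t ^ (r - 1)
  set B := fun t => z t ^ (l / m) * g t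
  have hAB : ∀ᵐ t ∂volume.restrict (Ioc a y),
      Q t * U t ^ l * V t ^ m ≤ A t ^ (l / r) * B t ^ (m / r) := by
    filter_upwards [hG0, hGtop, ae_restrict_mem measurableSet_Ioc] with t hGt0 hGttop ht
    have hGcancel : G t ^ (-(m / r)) * G t ^ (m / r) = 1 := by
      rw [← ENNReal.rpow_add _ _ hGt0 hGttop, neg_add_cancel, ENNReal.rpow_zero]
    have hlr : 0 ≤ l / r := by positivity
    have hmr : 0 ≤ m / r := by positivity
    have e1 : r / l * (l / r) = 1 := by field_simp
    have e2 : -(m / l) * (l / r) = -(m / r) := by field_simp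
    have e3 : (r - 1) * (l / r) = (r - 1) / r * l := by ring
    have e4 : l / m * (m / r) = 1 / r * l := by field_simp
    have e5 : r * (m / r) = m := by field_simp
    calc Q t * U t ^ l * V t ^ m
        ≤ Q t * (z t ^ (1 / r) * P t ^ ((r - 1) / r)) ^ l * V t ^ m := by
          gcongr; exact hUz t ht
      _ = Q t * G t ^ (-(m / r)) * P t ^ ((r - 1) / r * l) *
            (z t ^ (1 / r * l) * (G t ^ (m / r) * V t ^ m)) := by
          rw [ENNReal.mul_rpow_of_nonneg _ _ hl.le, ← ENNReal.rpow_mul, ← ENNReal.rpow_mul,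
            ← mul_one (Q t * _ * _), ← hGcancel]
          ring
      _ = A t ^ (l / r) * B t ^ (m / r) := by
          simp only [A, B, g, ENNReal.mul_rpow_of_nonneg _ _ hlr,
            ENNReal.mul_rpow_of_nonneg _ _ hmr, ← ENNReal.rpow_mul, e1, e2, e3, e4, e5,
            ENNReal.rpow_one]
  have hB : ∫⁻ t in Ioc a y, B t ≤ ENNReal.ofReal (m / r) * z y ^ (r / m) := by
    have hc : l / m + 1 = r / m := by rw [hr]; field_simp
    simpa only [hc, one_div_div] using
      setLIntegral_primitive_rpow_mul_le hg (c := l / m) (by positivity)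
  calc ∫⁻ t in Ioc a y, Q t * U t ^ l * V t ^ m
      ≤ ∫⁻ t in Ioc a y, A t ^ (l / r) * B t ^ (m / r) := lintegral_mono_ae hAB
    _ ≤ (∫⁻ t in Ioc a y, A t) ^ (l / r) * (∫⁻ t in Ioc a y, B t) ^ (m / r) :=
        ENNReal.lintegral_mul_norm_pow_le
          (((hQ.pow_const _).mul (hG.pow_const _)).mul
            (hPmono.measurable.aemeasurable.pow_const _))
          ((hzmono.measurable.aemeasurable.pow_const _).mul hg)
          (by positivity) (by positivity) (by rw [hr]; field_simp)
    _ ≤ (∫⁻ t in Ioc a y, A t) ^ (l / r) *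
          (ENNReal.ofReal (m / r) * z y ^ (r / m)) ^ (m / r) := by
        gcongr
    _ = _ := by
        rw [ENNReal.mul_rpow_of_nonneg _ _ (by positivity), ← ENNReal.rpow_mul,
          ENNReal.ofReal_rpow_of_nonneg (by positivity) (by positivity),
          div_mul_div_cancel₀ hm.ne', div_self hr0.ne', ENNReal.rpow_one]
        ring

theorem ae_ne_zero_of_lintegral_rpow_ne_top {α : Type*} [MeasurableSpace α] {μ : Measure α}
    {f : α → ℝ≥0∞} (hf : AEMeasurable f μ) {c : ℝ} (hc : c < 0) (h : ∫⁻ x, f x ^ c ∂μ ≠ ⊤) :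
    ∀ᵐ x ∂μ, f x ≠ 0 := by
  filter_upwards [ae_lt_top' (hf.pow_const c) h] with x hx hx0
  rw [hx0, ENNReal.zero_rpow_of_neg hc] at hx
  exact hx.ne rfl

theorem ACOn.ofReal_abs_le_lintegral {u u' : ℝ → ℝ} {a y t : ℝ} (hAC : ACOn u u' a y)
    (hu0 : u a = 0) (ht : t ∈ Icc a y) :
    ENNReal.ofReal |u t| ≤ ∫⁻ s in Ioc a t, ENNReal.ofReal |u' s| := by
  simp_rw [← Real.enorm_eq_ofReal_abs]
  rw [hAC.2 t ht, hu0, zero_add, intervalIntegral.integral_of_le ht.1]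
  exact enorm_integral_le_lintegral_enorm _

theorem beesack_das_left_general
    (l m a b : ℝ) (hl : 0 < l) (hm : 0 < m) (hlm : 1 < l + m)
    (p q : ℝ → ℝ) (hpmeas : Measurable p) (hqmeas : Measurable q)
    (hpint : (∫⁻ t in Set.Ioc a b, ENNReal.ofReal (p t) ^ (-(1 / (l + m - 1)))) < ⊤)
    (y : ℝ) (hyb : y ≤ b)
    (u u' : ℝ → ℝ) (hAC : ACOn u u' a y) (hu0 : u a = 0) :
    (∫⁻ t in Set.Ioc a y, ENNReal.ofReal (q t * |u t| ^ l * |u' t| ^ m)) ≤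
      opialK l m q p a y *
        ∫⁻ t in Set.Ioc a y, ENNReal.ofReal (p t * |u' t| ^ (l + m)) := by
  have hp : ∀ᵐ t ∂volume.restrict (Ioc a y), ENNReal.ofReal (p t) ≠ 0 :=
    ae_restrict_of_ae_restrict_of_subset (Ioc_subset_Ioc_right hyb)
      (ae_ne_zero_of_lintegral_rpow_ne_top hpmeas.ennreal_ofReal.aemeasurable
        (neg_lt_zero.2 (one_div_pos.2 (by linarith))) hpint.ne)
  have hu' : AEMeasurable u' (volume.restrict (Ioc a y)) :=
    (hAC.1.mono_set Ioc_subset_Icc_self).aemeasurable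
  simp_rw [ENNReal.ofReal_mul' (Real.rpow_nonneg (abs_nonneg _) _),
    ← ENNReal.ofReal_rpow_of_nonneg (abs_nonneg _) (by linarith : (0 : ℝ) ≤ l),
    ← ENNReal.ofReal_rpow_of_nonneg (abs_nonneg _) hm.le,
    ← ENNReal.ofReal_rpow_of_nonneg (abs_nonneg _) (by linarith : (0 : ℝ) ≤ l + m)]
  exact setLIntegral_opial_le hl hm hlm hqmeas.ennreal_ofReal.aemeasurable
    hpmeas.ennreal_ofReal.aemeasurable hu'.abs.ennreal_ofReal hp
    (ae_of_all _ fun _ => ENNReal.ofReal_ne_top)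
    fun t ht => hAC.ofReal_abs_le_lintegral hu0 (Ioc_subset_Icc_self ht)

/-- **Beesack–Das Opial-type inequality, left boundary condition.** -/
theorem beesack_das_left
    (l m a b : ℝ) (hl : 0 < l) (hm : 0 < m) (hlm : 1 < l + m) (hab : a < b)
    (p q : ℝ → ℝ) (hpmeas : Measurable p) (hqmeas : Measurable q)
    (hp0 : ∀ᵐ t ∂(volume.restrict (Set.Ioc a b)), 0 ≤ p t)
    (hq0 : ∀ᵐ t ∂(volume.restrict (Set.Ioc a b)), 0 ≤ q t)
    (hpint : (∫⁻ t in Set.Ioc a b, ENNReal.ofReal (p t) ^ (-(1 / (l + m - 1)))) < ⊤)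
    (y : ℝ) (hay : a ≤ y) (hyb : y ≤ b)
    (hK : opialK l m q p a y < ⊤)
    (u u' : ℝ → ℝ) (hAC : ACOn u u' a y) (hu0 : u a = 0) :
    (∫⁻ t in Set.Ioc a y, ENNReal.ofReal (q t * |u t| ^ l * |u' t| ^ m)) ≤
      opialK l m q p a y *
        ∫⁻ t in Set.Ioc a y, ENNReal.ofReal (p t * |u' t| ^ (l + m)) :=
  beesack_das_left_general l m a b hl hm hlm p q hpmeas hqmeas hpint y hyb u u' hAC hu0
end

section
/- (Classical Opial inequality) Let b > 0 and let u ∈ C^1((0,b)) ∩ C([0,b]) satisfy u(0) = u(b) = 0 and u(t) > 0 for every t ∈ (0,b). Then ∫_0^b |u(t) u'(t)| dt ≤ (b/4) ∫_0^b |u'(t)|^2 dt. -/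
open MeasureTheory Set Filter intervalIntegral
open scoped ENNReal Topology

lemma opial_cs_real {s : Set ℝ} (hs : MeasurableSet s) (hsf : volume s ≠ ⊤) {f : ℝ → ℝ}
    (hfnn : ∀ x ∈ s, 0 ≤ f x) (hf : IntegrableOn f s) (hf2 : IntegrableOn (fun x => f x ^ 2) s) :
    (∫ x in s, f x) ^ 2 ≤ (volume s).toReal * ∫ x in s, f x ^ 2 := by
  have hnn : 0 ≤ᵐ[volume.restrict s] f := by
    filter_upwards [ae_restrict_mem hs] with x hx using hfnn x hx
  have hnn2 : 0 ≤ᵐ[volume.restrict s] fun x => f x ^ 2 := by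
    filter_upwards with x using sq_nonneg _
  set F : ℝ → ℝ≥0∞ := fun x => ENNReal.ofReal (f x) with hF
  have hFmeas : AEMeasurable F (volume.restrict s) :=
    ENNReal.measurable_ofReal.comp_aemeasurable hf.aestronglyMeasurable.aemeasurable
  have h1 : ENNReal.ofReal (∫ x in s, f x) = ∫⁻ x in s, F x :=
    ofReal_integral_eq_lintegral_ofReal hf hnn
  have h2 : ∫⁻ x in s, F x ^ (2 : ℕ) = ENNReal.ofReal (∫ x in s, f x ^ 2) := by
    rw [ofReal_integral_eq_lintegral_ofReal hf2 hnn2]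
    refine lintegral_congr_ae ?_
    filter_upwards [ae_restrict_mem hs] with x hx
    rw [hF, ← ENNReal.ofReal_pow (hfnn x hx)]
  have holder := ENNReal.lintegral_mul_le_Lp_mul_Lq (volume.restrict s)
    (Real.HolderConjugate.two_two) (aemeasurable_const (b := (1:ℝ≥0∞))) hFmeas
  simp only [one_mul, ENNReal.one_rpow, Pi.mul_apply] at holder
  rw [lintegral_one, Measure.restrict_apply_univ] at holder
  have hsq : (∫⁻ x in s, F x) ^ (2:ℕ) ≤ volume s * ∫⁻ x in s, F x ^ (2 : ℕ) := by
    calc (∫⁻ x in s, F x) ^ (2:ℕ)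
        ≤ ((volume s) ^ (1/2 : ℝ) * (∫⁻ x in s, F x ^ (2:ℝ)) ^ (1/2 : ℝ)) ^ (2:ℕ) := by
          exact pow_le_pow_left' holder 2
      _ = volume s * ∫⁻ x in s, F x ^ (2 : ℕ) := by
          rw [mul_pow, ← ENNReal.rpow_natCast ((volume s) ^ (1/2:ℝ)) 2,
            ← ENNReal.rpow_natCast ((∫⁻ x in s, F x ^ (2:ℝ)) ^ (1/2:ℝ)) 2,
            ← ENNReal.rpow_mul, ← ENNReal.rpow_mul]
          norm_num
  rw [h2] at hsq
  have hofreal : ENNReal.ofReal ((∫ x in s, f x) ^ 2)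
      ≤ ENNReal.ofReal ((volume s).toReal * ∫ x in s, f x ^ 2) := by
    rw [ENNReal.ofReal_pow (integral_nonneg_of_ae hnn), h1,
      ENNReal.ofReal_mul ENNReal.toReal_nonneg, ENNReal.ofReal_toReal hsf]
    exact hsq
  have hrhs : 0 ≤ (volume s).toReal * ∫ x in s, f x ^ 2 :=
    mul_nonneg ENNReal.toReal_nonneg (integral_nonneg_of_ae hnn2)
  exact (ENNReal.ofReal_le_ofReal_iff hrhs).mp hofreal


/-- **Classical Opial inequality.** If `u ∈ C¹((0,b)) ∩ C([0,b])`, `u(0) = u(b) = 0` and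
`u > 0` on `(0,b)`, then `∫_0^b |u u'| ≤ (b/4) ∫_0^b |u'|²`. -/
theorem opial_classical (b : ℝ) (hb : 0 < b) (u u' : ℝ → ℝ)
    (hucont : ContinuousOn u (Set.Icc 0 b))
    (huderiv : ∀ t ∈ Set.Ioo 0 b, HasDerivAt u (u' t) t)
    (hu'cont : ContinuousOn u' (Set.Ioo 0 b))
    (hu0 : u 0 = 0) (hub : u b = 0)
    (hupos : ∀ t ∈ Set.Ioo 0 b, 0 < u t) :
    (∫⁻ t in Set.Ioo 0 b, ENNReal.ofReal |u t * u' t|) ≤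
      ENNReal.ofReal (b / 4) * ∫⁻ t in Set.Ioo 0 b, ENNReal.ofReal (|u' t| ^ 2) := by
  by_cases hI : (∫⁻ t in Set.Ioo 0 b, ENNReal.ofReal (|u' t| ^ 2)) = ⊤
  · rw [hI, ENNReal.mul_top (ENNReal.ofReal_pos.mpr (by positivity)).ne']
    exact le_top
  set c : ℝ := b / 2 with hcdef
  have hc0 : 0 < c := by positivity
  have hcb : c < b := by rw [hcdef]; linarith
  set g : ℝ → ℝ := fun t => |u' t| with hgdef
  have hgnn : ∀ t, 0 ≤ g t := fun t => abs_nonneg _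
  have hgcont : ContinuousOn g (Set.Ioo 0 b) := hu'cont.abs
  have hgmeas : AEStronglyMeasurable g (volume.restrict (Set.Ioo 0 b)) :=
    hgcont.aestronglyMeasurable measurableSet_Ioo
  -- g² is integrable on Ioo 0 b
  have hg2int : IntegrableOn (fun t => g t ^ 2) (Set.Ioo 0 b) := by
    refine ⟨(hgmeas.mul hgmeas).congr (Eventually.of_forall fun t => (sq (g t)).symm), ?_⟩
    rw [hasFiniteIntegral_iff_ofReal (Eventually.of_forall fun t => sq_nonneg _)]
    exact lt_top_iff_ne_top.mpr hI
  -- g is integrable on Ioo 0 b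
  have hgint : IntegrableOn g (Set.Ioo 0 b) := by
    have hconst : IntegrableOn (fun _ : ℝ => (1:ℝ)) (Set.Ioo 0 b) :=
      integrableOn_const measure_Ioo_lt_top.ne
    refine Integrable.mono' (hg2int.add hconst) hgmeas ?_
    filter_upwards with t
    rw [Real.norm_eq_abs, abs_of_nonneg (hgnn t)]
    show g t ≤ g t ^ 2 + 1
    nlinarith [sq_nonneg (g t - 1), hgnn t]
  have hgint' : IntegrableOn g (Set.Ioc 0 b) := Iff.mpr integrableOn_Ioc_iff_integrableOn_Ioo hgint
  -- interval integrability of g on any subinterval of [0, b]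
  have hgii : ∀ x y, 0 ≤ x → x ≤ y → y ≤ b → IntervalIntegrable g volume x y := by
    intro x y hx hxy hyb
    rw [intervalIntegrable_iff_integrableOn_Ioc_of_le hxy]
    exact hgint'.mono_set (Set.Ioc_subset_Ioc hx hyb)
  set v : ℝ → ℝ := fun t => ∫ s in (0:ℝ)..t, g s with hvdef
  set w : ℝ → ℝ := fun t => ∫ s in t..b, g s with hwdef
  -- nonnegativity and monotonicity facts
  have hvnn : ∀ t, 0 ≤ t → t ≤ b → 0 ≤ v t := fun t ht htb =>
    intervalIntegral.integral_nonneg ht (fun s _ => hgnn s)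
  have hwnn : ∀ t, 0 ≤ t → t ≤ b → 0 ≤ w t := fun t ht htb =>
    intervalIntegral.integral_nonneg htb (fun s _ => hgnn s)
  -- derivative of v
  have hvderiv : ∀ t ∈ Set.Ioo 0 b, HasDerivAt v (g t) t := by
    intro t ht
    exact intervalIntegral.integral_hasDerivAt_right (hgii 0 t le_rfl ht.1.le ht.2.le)
      (hgcont.stronglyMeasurableAtFilter isOpen_Ioo t ht)
      (hgcont.continuousAt (Ioo_mem_nhds ht.1 ht.2))
  have hwderiv : ∀ t ∈ Set.Ioo 0 b, HasDerivAt w (-g t) t := by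
    intro t ht
    exact intervalIntegral.integral_hasDerivAt_left (hgii t b ht.1.le ht.2.le le_rfl)
      (hgcont.stronglyMeasurableAtFilter isOpen_Ioo t ht)
      (hgcont.continuousAt (Ioo_mem_nhds ht.1 ht.2))
  have hvcont : ContinuousOn v (Set.Ioo 0 b) := fun t ht =>
    ((hvderiv t ht).continuousAt).continuousWithinAt
  have hwcont : ContinuousOn w (Set.Ioo 0 b) := fun t ht =>
    ((hwderiv t ht).continuousAt).continuousWithinAt
  -- v is monotone on [0,b]
  have hvmono : ∀ x y, 0 ≤ x → x ≤ y → y ≤ b → v x ≤ v y := by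
    intro x y hx hxy hyb
    have : v x + ∫ s in x..y, g s = v y :=
      intervalIntegral.integral_add_adjacent_intervals (hgii 0 x le_rfl hx (hxy.trans hyb))
        (hgii x y hx hxy hyb)
    nlinarith [intervalIntegral.integral_nonneg (μ := volume) hxy (fun s _ => hgnn s)]
  have hwmono : ∀ x y, 0 ≤ x → x ≤ y → y ≤ b → w y ≤ w x := by
    intro x y hx hxy hyb
    have : (∫ s in x..y, g s) + w y = w x :=
      intervalIntegral.integral_add_adjacent_intervals (hgii x y hx hxy hyb)
        (hgii y b (hx.trans hxy) hyb le_rfl)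
    nlinarith [intervalIntegral.integral_nonneg (μ := volume) hxy (fun s _ => hgnn s)]
  -- |u| ≤ v on Ioo 0 b
  have hu_le_v : ∀ t ∈ Set.Ioo 0 b, |u t| ≤ v t := by
    intro t ht
    have key : ∀ ε ∈ Set.Ioo 0 t, |u t| ≤ |u ε| + v t := by
      intro ε hε
      have huIcc : Set.uIcc ε t = Set.Icc ε t := Set.uIcc_of_le hε.2.le
      have hsub : Set.uIcc ε t ⊆ Set.Ioo 0 b := by
        rw [huIcc]; exact fun s hs => ⟨hε.1.trans_le hs.1, hs.2.trans_lt ht.2⟩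
      have hu'ii : IntervalIntegrable u' volume ε t :=
        (hu'cont.mono hsub).intervalIntegrable
      have hFTC : ∫ s in ε..t, u' s = u t - u ε :=
        intervalIntegral.integral_eq_sub_of_hasDerivAt
          (fun s hs => huderiv s (hsub hs)) hu'ii
      have habs : |u t - u ε| ≤ ∫ s in ε..t, g s := by
        rw [← hFTC]
        exact intervalIntegral.abs_integral_le_integral_abs hε.2.le
      have hadd : v ε + ∫ s in ε..t, g s = v t :=
        intervalIntegral.integral_add_adjacent_intervals
          (hgii 0 ε le_rfl hε.1.le (by linarith [ht.2, hε.2]))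
          (hgii ε t hε.1.le hε.2.le ht.2.le)
      have hvε : 0 ≤ v ε := hvnn ε hε.1.le (by linarith [ht.2, hε.2])
      calc |u t| = |u ε + (u t - u ε)| := by ring_nf
        _ ≤ |u ε| + |u t - u ε| := abs_add_le _ _
        _ ≤ |u ε| + v t := by nlinarith
    have hmem : (0:ℝ) ∈ closure (Set.Ioo 0 t) := by
      rw [closure_Ioo ht.1.ne]; exact ⟨le_rfl, ht.1.le⟩
    have hne : (𝓝[Set.Ioo 0 t] (0:ℝ)).NeBot := mem_closure_iff_nhdsWithin_neBot.mp hmem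
    have hsub' : Set.Ioo 0 t ⊆ Set.Icc 0 b :=
      fun s hs => ⟨hs.1.le, (hs.2.trans ht.2).le⟩
    have htend : Tendsto (fun ε => |u ε| + v t) (𝓝[Set.Ioo 0 t] 0) (𝓝 (|u 0| + v t)) := by
      have := ((hucont 0 ⟨le_rfl, hb.le⟩).mono hsub').tendsto
      exact (this.abs.add tendsto_const_nhds)
    have : |u t| ≤ |u 0| + v t :=
      ge_of_tendsto htend (by filter_upwards [eventually_mem_nhdsWithin] with ε hε using key ε hε)
    simpa [hu0] using this
  -- |u| ≤ w on Ioo 0 b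
  have hu_le_w : ∀ t ∈ Set.Ioo 0 b, |u t| ≤ w t := by
    intro t ht
    have key : ∀ η ∈ Set.Ioo t b, |u t| ≤ |u η| + w t := by
      intro η hη
      have huIcc : Set.uIcc t η = Set.Icc t η := Set.uIcc_of_le hη.1.le
      have hsub : Set.uIcc t η ⊆ Set.Ioo 0 b := by
        rw [huIcc]; exact fun s hs => ⟨ht.1.trans_le hs.1, hs.2.trans_lt hη.2⟩
      have hu'ii : IntervalIntegrable u' volume t η :=
        (hu'cont.mono hsub).intervalIntegrable
      have hFTC : ∫ s in t..η, u' s = u η - u t :=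
        intervalIntegral.integral_eq_sub_of_hasDerivAt
          (fun s hs => huderiv s (hsub hs)) hu'ii
      have habs : |u η - u t| ≤ ∫ s in t..η, g s := by
        rw [← hFTC]
        exact intervalIntegral.abs_integral_le_integral_abs hη.1.le
      have hadd : (∫ s in t..η, g s) + w η = w t :=
        intervalIntegral.integral_add_adjacent_intervals
          (hgii t η ht.1.le hη.1.le hη.2.le)
          (hgii η b (by linarith [ht.1, hη.1]) hη.2.le le_rfl)
      have hwη : 0 ≤ w η := hwnn η (by linarith [ht.1, hη.1]) hη.2.le
      calc |u t| = |u η + (u t - u η)| := by ring_nf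
        _ ≤ |u η| + |u t - u η| := abs_add_le _ _
        _ ≤ |u η| + w t := by rw [abs_sub_comm] at habs; nlinarith
    have hmem : b ∈ closure (Set.Ioo t b) := by
      rw [closure_Ioo ht.2.ne]; exact ⟨ht.2.le, le_rfl⟩
    have hne : (𝓝[Set.Ioo t b] b).NeBot := mem_closure_iff_nhdsWithin_neBot.mp hmem
    have hsub' : Set.Ioo t b ⊆ Set.Icc 0 b :=
      fun s hs => ⟨(ht.1.trans hs.1).le, hs.2.le⟩
    have htend : Tendsto (fun η => |u η| + w t) (𝓝[Set.Ioo t b] b) (𝓝 (|u b| + w t)) := by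
      have := ((hucont b ⟨hb.le, le_rfl⟩).mono hsub').tendsto
      exact (this.abs.add tendsto_const_nhds)
    have : |u t| ≤ |u b| + w t :=
      ge_of_tendsto htend (by filter_upwards [eventually_mem_nhdsWithin] with η hη using key η hη)
    simpa [hub] using this
  -- integrability of v*g and w*g
  have hsub1 : Set.Ioc (0:ℝ) c ⊆ Set.Ioo 0 b := fun x hx => ⟨hx.1, hx.2.trans_lt hcb⟩
  have hsub2 : Set.Ioo c b ⊆ Set.Ioo 0 b := fun x hx => ⟨hc0.trans hx.1, hx.2⟩
  have hvg_int : IntegrableOn (fun t => v t * g t) (Set.Ioc 0 c) := by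
    have hvg_meas : AEStronglyMeasurable (fun t => v t * g t)
        (volume.restrict (Set.Ioc 0 c)) :=
      (((hvcont.mono hsub1).mul (hgcont.mono hsub1)).aestronglyMeasurable measurableSet_Ioc)
    refine Integrable.mono'
      ((hgint'.mono_set (Set.Ioc_subset_Ioc le_rfl hcb.le)).const_mul (v b)) hvg_meas ?_
    filter_upwards [ae_restrict_mem measurableSet_Ioc] with t htm
    rw [Real.norm_eq_abs,
      abs_of_nonneg (mul_nonneg (hvnn t htm.1.le (htm.2.trans hcb.le)) (hgnn t))]
    exact mul_le_mul_of_nonneg_right (hvmono t b htm.1.le (htm.2.trans hcb.le) le_rfl) (hgnn t)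
  have hwg_int : IntegrableOn (fun t => w t * g t) (Set.Ioo c b) := by
    have hwg_meas : AEStronglyMeasurable (fun t => w t * g t)
        (volume.restrict (Set.Ioo c b)) :=
      (((hwcont.mono hsub2).mul (hgcont.mono hsub2)).aestronglyMeasurable measurableSet_Ioo)
    refine Integrable.mono'
      ((hgint.mono_set hsub2).const_mul (w c)) hwg_meas ?_
    filter_upwards [ae_restrict_mem measurableSet_Ioo] with t htm
    rw [Real.norm_eq_abs,
      abs_of_nonneg (mul_nonneg (hwnn t (hc0.trans htm.1).le htm.2.le) (hgnn t))]
    exact mul_le_mul_of_nonneg_right (hwmono c t hc0.le htm.1.le htm.2.le) (hgnn t)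
  -- key set-integral estimates
  have hhalf1 : ∫ t in Set.Ioc 0 c, v t * g t ≤ v c ^ 2 / 2 := by
    set e : ℕ → ℝ := fun n => c / (n + 1) with hedef
    have he_pos : ∀ n, 0 < e n := fun n => by positivity
    have he_le : ∀ n, e n ≤ c := by
      intro n
      rw [hedef, div_le_iff₀ (by positivity)]
      nlinarith [Nat.cast_nonneg (α := ℝ) n]
    have hmono : Monotone (fun n => Set.Ioc (e n) c) := by
      intro m n hmn
      apply Set.Ioc_subset_Ioc_left
      apply div_le_div_of_nonneg_left hc0.le (by positivity)
      exact_mod_cast by exact_mod_cast add_le_add_left (Nat.cast_le.mpr hmn) (1:ℝ)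
    have hUnion : (⋃ n, Set.Ioc (e n) c) = Set.Ioc 0 c := by
      ext x
      simp only [Set.mem_iUnion, Set.mem_Ioc]
      constructor
      · rintro ⟨n, hn, hxc⟩; exact ⟨(he_pos n).trans hn, hxc⟩
      · rintro ⟨hx0, hxc⟩
        obtain ⟨n, hn⟩ := exists_nat_gt (c / x)
        refine ⟨n, ?_, hxc⟩
        have h1 : c / x < (n:ℝ) + 1 := hn.trans (lt_add_one _)
        rw [div_lt_iff₀ hx0] at h1
        rw [hedef, div_lt_iff₀ (by positivity)]
        calc c < ((n:ℝ) + 1) * x := h1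
          _ = x * ((n:ℝ) + 1) := mul_comm _ _
    have hstep : ∀ n, ∫ t in Set.Ioc (e n) c, v t * g t ≤ v c ^ 2 / 2 := by
      intro n
      have hsubn : Set.Icc (e n) c ⊆ Set.Ioo 0 b :=
        fun s hs => ⟨(he_pos n).trans_le hs.1, lt_of_le_of_lt hs.2 hcb⟩
      have hd : ∀ s ∈ Set.uIcc (e n) c, HasDerivAt (fun t => v t ^ 2 / 2) (v s * g s) s := by
        intro s hs
        rw [Set.uIcc_of_le (he_le n)] at hs
        have h : HasDerivAt (fun t => v t ^ 2 / 2) (((2:ℕ):ℝ) * v s ^ (2 - 1) * g s / 2) s :=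
          ((hvderiv s (hsubn hs)).pow 2).div_const 2
        convert h using 1
        simp only [Nat.cast_ofNat, pow_one]
        ring
      have hcontvg : ContinuousOn (fun t => v t * g t) (Set.uIcc (e n) c) := by
        rw [Set.uIcc_of_le (he_le n)]
        exact (hvcont.mono hsubn).mul (hgcont.mono hsubn)
      have hii : IntervalIntegrable (fun t => v t * g t) volume (e n) c :=
        hcontvg.intervalIntegrable
      have hFTC := intervalIntegral.integral_eq_sub_of_hasDerivAt hd hii
      rw [intervalIntegral.integral_of_le (he_le n)] at hFTC
      rw [hFTC]
      nlinarith [sq_nonneg (v (e n)), hvnn (e n) (he_pos n).le ((he_le n).trans hcb.le)]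
    have htd := MeasureTheory.tendsto_setIntegral_of_monotone
      (fun n => measurableSet_Ioc) hmono (hUnion ▸ hvg_int)
    rw [hUnion] at htd
    exact le_of_tendsto' htd hstep
  have hhalf2 : ∫ t in Set.Ioo c b, w t * g t ≤ w c ^ 2 / 2 := by
    set d : ℕ → ℝ := fun n => b - (b - c) / (n + 1) with hddef
    have hbc : 0 < b - c := by linarith
    have hd_lt : ∀ n, d n < b := fun n => by
      rw [hddef]; have : 0 < (b - c) / (n + 1) := by positivity
      simp only []; linarith
    have hd_ge : ∀ n, c ≤ d n := by
      intro n
      rw [hddef]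
      have : (b - c) / (n + 1) ≤ b - c := by
        rw [div_le_iff₀ (by positivity)]
        nlinarith [Nat.cast_nonneg (α := ℝ) n]
      simp only []; linarith
    have hmono : Monotone (fun n => Set.Ioc c (d n)) := by
      intro m n hmn
      apply Set.Ioc_subset_Ioc_right
      rw [hddef]
      simp only []
      have : (b - c) / (n + 1) ≤ (b - c) / (m + 1) := by
        apply div_le_div_of_nonneg_left hbc.le (by positivity)
        exact_mod_cast by exact_mod_cast add_le_add_left (Nat.cast_le.mpr hmn) (1:ℝ)
      linarith
    have hUnion : (⋃ n, Set.Ioc c (d n)) = Set.Ioo c b := by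
      ext x
      simp only [Set.mem_iUnion, Set.mem_Ioc, Set.mem_Ioo]
      constructor
      · rintro ⟨n, hcx, hxd⟩; exact ⟨hcx, hxd.trans_lt (hd_lt n)⟩
      · rintro ⟨hcx, hxb⟩
        obtain ⟨n, hn⟩ := exists_nat_gt ((b - c) / (b - x))
        refine ⟨n, hcx, ?_⟩
        have hbx : 0 < b - x := by linarith
        have h1 : (b - c) / (b - x) < (n:ℝ) + 1 := hn.trans (lt_add_one _)
        rw [div_lt_iff₀ hbx] at h1
        rw [hddef]
        have h2 : (b - c) / ((n:ℝ) + 1) ≤ b - x := by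
          rw [div_le_iff₀ (by positivity)]
          nlinarith
        simp only []
        linarith
    have hstep : ∀ n, ∫ t in Set.Ioc c (d n), w t * g t ≤ w c ^ 2 / 2 := by
      intro n
      have hsubn : Set.Icc c (d n) ⊆ Set.Ioo 0 b :=
        fun s hs => ⟨hc0.trans_le hs.1, lt_of_le_of_lt hs.2 (hd_lt n)⟩
      have hd' : ∀ s ∈ Set.uIcc c (d n),
          HasDerivAt (fun t => -(w t ^ 2 / 2)) (w s * g s) s := by
        intro s hs
        rw [Set.uIcc_of_le (hd_ge n)] at hs
        have h : HasDerivAt (fun t => -(w t ^ 2 / 2))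
            (-(((2:ℕ):ℝ) * w s ^ (2 - 1) * (-g s) / 2)) s :=
          (((hwderiv s (hsubn hs)).pow 2).div_const 2).neg
        convert h using 1
        simp only [Nat.cast_ofNat, pow_one]
        ring
      have hcontwg : ContinuousOn (fun t => w t * g t) (Set.uIcc c (d n)) := by
        rw [Set.uIcc_of_le (hd_ge n)]
        exact (hwcont.mono hsubn).mul (hgcont.mono hsubn)
      have hii : IntervalIntegrable (fun t => w t * g t) volume c (d n) :=
        hcontwg.intervalIntegrable
      have hFTC := intervalIntegral.integral_eq_sub_of_hasDerivAt hd' hii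
      rw [intervalIntegral.integral_of_le (hd_ge n)] at hFTC
      rw [hFTC]
      nlinarith [sq_nonneg (w (d n)), hwnn (d n) (hc0.le.trans (hd_ge n)) (hd_lt n).le]
    have htd := MeasureTheory.tendsto_setIntegral_of_monotone
      (fun n => measurableSet_Ioc) hmono (hUnion ▸ hwg_int)
    rw [hUnion] at htd
    exact le_of_tendsto' htd hstep
  -- Cauchy–Schwarz consequences
  have hg2int1' : IntegrableOn (fun t => g t ^ 2) (Set.Ioc 0 c) :=
    hg2int.mono_set (fun x hx => ⟨hx.1, hx.2.trans_lt hcb⟩)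
  have hcs1 : v c ^ 2 ≤ c * ∫ t in Set.Ioc 0 c, g t ^ 2 := by
    have hcs := opial_cs_real measurableSet_Ioc measure_Ioc_lt_top.ne
      (fun x _ => hgnn x) (hgint'.mono_set (Set.Ioc_subset_Ioc le_rfl hcb.le)) hg2int1'
    rw [Real.volume_Ioc, ENNReal.toReal_ofReal (by linarith)] at hcs
    have hvc : v c = ∫ t in Set.Ioc 0 c, g t := intervalIntegral.integral_of_le hc0.le
    rw [hvc]
    simpa using hcs
  have hcs2 : w c ^ 2 ≤ c * ∫ t in Set.Ioo c b, g t ^ 2 := by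
    have hg2int2' : IntegrableOn (fun t => g t ^ 2) (Set.Ioo c b) :=
      hg2int.mono_set hsub2
    have hcs := opial_cs_real measurableSet_Ioo measure_Ioo_lt_top.ne
      (fun x _ => hgnn x) (hgint.mono_set hsub2) hg2int2'
    rw [Real.volume_Ioo, ENNReal.toReal_ofReal (by linarith)] at hcs
    have hwc : w c = ∫ t in Set.Ioo c b, g t := by
      rw [hwdef]
      simp only []
      rw [intervalIntegral.integral_of_le hcb.le]
      exact (setIntegral_congr_set Ioo_ae_eq_Ioc).symm
    have hbc2 : b - c = c := by rw [hcdef]; ring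
    rw [hwc]
    rw [hbc2] at hcs
    exact hcs
  -- split the domain
  have hsplit : Set.Ioo (0:ℝ) b = Set.Ioc 0 c ∪ Set.Ioo c b := by
    rw [Set.Ioc_union_Ioo_eq_Ioo hc0.le hcb]
  have hdisj : Disjoint (Set.Ioc (0:ℝ) c) (Set.Ioo c b) := by
    apply Set.disjoint_left.mpr
    rintro x ⟨_, hxc⟩ ⟨hcx, _⟩; exact absurd hxc (not_le.mpr hcx)
  have hg2int1 : IntegrableOn (fun t => g t ^ 2) (Set.Ioc 0 c) :=
    hg2int.mono_set (fun x hx => ⟨hx.1, hx.2.trans_lt hcb⟩)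
  have hg2int2 : IntegrableOn (fun t => g t ^ 2) (Set.Ioo c b) :=
    hg2int.mono_set (fun x hx => ⟨hc0.trans hx.1, hx.2⟩)
  -- piece 1 in ℝ≥0∞
  have hb4c2 : b / 4 = c / 2 := by rw [hcdef]; ring
  have hkey1 : (∫⁻ t in Set.Ioc 0 c, ENNReal.ofReal |u t * u' t|) ≤
      ENNReal.ofReal (b / 4) * ∫⁻ t in Set.Ioc 0 c, ENNReal.ofReal (|u' t| ^ 2) := by
    calc (∫⁻ t in Set.Ioc 0 c, ENNReal.ofReal |u t * u' t|)
        ≤ ∫⁻ t in Set.Ioc 0 c, ENNReal.ofReal (v t * g t) := by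
          refine lintegral_mono_ae ?_
          filter_upwards [ae_restrict_mem measurableSet_Ioc] with t htm
          apply ENNReal.ofReal_le_ofReal
          rw [abs_mul]
          exact mul_le_mul_of_nonneg_right (hu_le_v t (hsub1 htm)) (hgnn t)
      _ = ENNReal.ofReal (∫ t in Set.Ioc 0 c, v t * g t) := by
          rw [ofReal_integral_eq_lintegral_ofReal hvg_int ?_]
          filter_upwards [ae_restrict_mem measurableSet_Ioc] with t htm
          exact mul_nonneg (hvnn t htm.1.le (htm.2.trans hcb.le)) (hgnn t)
      _ ≤ ENNReal.ofReal (b / 4 * ∫ t in Set.Ioc 0 c, g t ^ 2) := by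
          apply ENNReal.ofReal_le_ofReal
          rw [hb4c2]
          linarith [hhalf1, hcs1]
      _ = ENNReal.ofReal (b / 4) * ∫⁻ t in Set.Ioc 0 c, ENNReal.ofReal (|u' t| ^ 2) := by
          rw [ENNReal.ofReal_mul (by positivity)]
          congr 1
          exact ofReal_integral_eq_lintegral_ofReal hg2int1'
            (Eventually.of_forall fun t => sq_nonneg _)
  have hkey2 : (∫⁻ t in Set.Ioo c b, ENNReal.ofReal |u t * u' t|) ≤
      ENNReal.ofReal (b / 4) * ∫⁻ t in Set.Ioo c b, ENNReal.ofReal (|u' t| ^ 2) := by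
    calc (∫⁻ t in Set.Ioo c b, ENNReal.ofReal |u t * u' t|)
        ≤ ∫⁻ t in Set.Ioo c b, ENNReal.ofReal (w t * g t) := by
          refine lintegral_mono_ae ?_
          filter_upwards [ae_restrict_mem measurableSet_Ioo] with t htm
          apply ENNReal.ofReal_le_ofReal
          rw [abs_mul]
          exact mul_le_mul_of_nonneg_right (hu_le_w t (hsub2 htm)) (hgnn t)
      _ = ENNReal.ofReal (∫ t in Set.Ioo c b, w t * g t) := by
          rw [ofReal_integral_eq_lintegral_ofReal hwg_int ?_]
          filter_upwards [ae_restrict_mem measurableSet_Ioo] with t htm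
          exact mul_nonneg (hwnn t (hc0.trans htm.1).le htm.2.le) (hgnn t)
      _ ≤ ENNReal.ofReal (b / 4 * ∫ t in Set.Ioo c b, g t ^ 2) := by
          apply ENNReal.ofReal_le_ofReal
          rw [hb4c2]
          linarith [hhalf2, hcs2]
      _ = ENNReal.ofReal (b / 4) * ∫⁻ t in Set.Ioo c b, ENNReal.ofReal (|u' t| ^ 2) := by
          rw [ENNReal.ofReal_mul (by positivity)]
          congr 1
          exact ofReal_integral_eq_lintegral_ofReal
            (hg2int.mono_set hsub2) (Eventually.of_forall fun t => sq_nonneg _)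
  calc (∫⁻ t in Set.Ioo 0 b, ENNReal.ofReal |u t * u' t|)
      = (∫⁻ t in Set.Ioc 0 c, ENNReal.ofReal |u t * u' t|)
        + ∫⁻ t in Set.Ioo c b, ENNReal.ofReal |u t * u' t| := by
        rw [hsplit, lintegral_union measurableSet_Ioo hdisj]
    _ ≤ ENNReal.ofReal (b / 4) * (∫⁻ t in Set.Ioc 0 c, ENNReal.ofReal (|u' t| ^ 2))
        + ENNReal.ofReal (b / 4) * ∫⁻ t in Set.Ioo c b, ENNReal.ofReal (|u' t| ^ 2) :=
        add_le_add hkey1 hkey2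
    _ = ENNReal.ofReal (b / 4) * ∫⁻ t in Set.Ioo 0 b, ENNReal.ofReal (|u' t| ^ 2) := by
        rw [← mul_add, hsplit, lintegral_union measurableSet_Ioo hdisj]
end

section
/- (Finiteness of the Beesack–Das constant for power weights) Let 1 < p < ∞, 0 < l < p, 0 < α < p, C > 0, C' > 0, γ ∈ ℝ, and set q(t) := C t^γ and v(t) := C' t^{α−1} for t > 0. Then for every r ∈ (0,1]: K(0,r,q,v) < ∞ if and only if γ > α − 1 − l. -/
open MeasureTheory Set Filter
open scoped ENNReal

/-- The Beesack–Das constant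
`K(s,·,q,v) = ((p-l)/p)^{(p-l)/p} [∫_S q(t)^{p/l} v(t)^{-(p-l)/l}
  (∫_s^t v(σ)^{-1/(p-1)} dσ)^{p-1} dt]^{l/p}`, over a set `S`. -/
noncomputable def BDK (p l : ℝ) (q v : ℝ → ℝ) (s : ℝ) (S : Set ℝ) : ℝ≥0∞ :=
  ENNReal.ofReal (((p - l) / p) ^ ((p - l) / p)) *
    (∫⁻ t in S,
      ENNReal.ofReal (q t) ^ (p / l) * ENNReal.ofReal (v t) ^ (-((p - l) / l)) *
        (∫⁻ σ in Set.Ioc s t, ENNReal.ofReal (v σ) ^ (-(1 / (p - 1)))) ^ (p - 1)) ^ (l / p)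

/-- Finiteness of `∫⁻ t in (0,r], t^e` iff `-1 < e`. -/
lemma BDK_aux_fin (e r : ℝ) (hr : 0 < r) :
    (∫⁻ t in Ioc (0:ℝ) r, ENNReal.ofReal (t ^ e)) < ⊤ ↔ -1 < e := by
  rw [← setLIntegral_congr Ioo_ae_eq_Ioc]
  have hm : Measurable fun t : ℝ => t ^ e := by fun_prop
  have hnn : 0 ≤ᵐ[volume.restrict (Ioo (0:ℝ) r)] fun t => t ^ e := by
    filter_upwards [ae_restrict_mem measurableSet_Ioo] with t ht
    exact Real.rpow_nonneg ht.1.le _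
  rw [← hasFiniteIntegral_iff_ofReal hnn]
  constructor
  · intro h
    have : IntegrableOn (fun t : ℝ => t ^ e) (Ioo 0 r) := ⟨hm.aestronglyMeasurable.restrict, h⟩
    exact (intervalIntegral.integrableOn_Ioo_rpow_iff hr).mp this
  · intro h
    exact ((intervalIntegral.integrableOn_Ioo_rpow_iff hr).mpr h).2

/-- The inner integral computation: `∫⁻ σ in (0,t], c σ^e = c t^{e+1}/(e+1)`. -/
lemma BDK_aux_inner (c e t : ℝ) (hc : 0 < c) (he : -1 < e) (ht : 0 < t) :
    ∫⁻ σ in Ioc (0:ℝ) t, ENNReal.ofReal (c * σ ^ e)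
      = ENNReal.ofReal (c * (t ^ (e + 1) / (e + 1))) := by
  have hint : IntegrableOn (fun σ : ℝ => c * σ ^ e) (Ioc 0 t) := by
    have := (intervalIntegral.intervalIntegrable_rpow' (a := 0) (b := t) he).const_mul c
    rwa [intervalIntegrable_iff_integrableOn_Ioc_of_le ht.le] at this
  have hnn : 0 ≤ᵐ[volume.restrict (Ioc (0:ℝ) t)] fun σ => c * σ ^ e := by
    filter_upwards [ae_restrict_mem measurableSet_Ioc] with σ hσ
    exact mul_nonneg hc.le (Real.rpow_nonneg hσ.1.le _)
  rw [← ofReal_integral_eq_lintegral_ofReal hint hnn]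
  congr 1
  rw [MeasureTheory.integral_const_mul, ← intervalIntegral.integral_of_le ht.le,
    integral_rpow (Or.inl he), Real.zero_rpow (by linarith), sub_zero]

/-- **Finiteness of the Beesack–Das constant for power weights**:
for `q(t) = C t^γ` and `v(t) = C' t^{α-1}`, one has
`K(0,r,q,v) < ∞` if and only if `γ > α - 1 - l`, for every `r ∈ (0,1]`. -/
theorem BDK_power_weights_finite_iff
    (p l α C C' γ : ℝ)
    (hp : 1 < p) (hl0 : 0 < l) (hlp : l < p) (hα0 : 0 < α) (hαp : α < p)
    (hC : 0 < C) (hC' : 0 < C') :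
    ∀ r : ℝ, 0 < r → r ≤ 1 →
      (BDK p l (fun t => C * t ^ γ) (fun t => C' * t ^ (α - 1)) 0 (Set.Ioc 0 r) < ⊤ ↔
        γ > α - 1 - l) := by
  intro r hr hr1
  have hp0 : (0:ℝ) < p := by linarith
  have hp1 : (0:ℝ) < p - 1 := by linarith
  have hpl : (0:ℝ) < p - l := by linarith
  set m : ℝ := -(1 / (p - 1)) with hm
  have heinner : -1 < (α - 1) * m := by
    have h1 : (α - 1) * m = (1 - α) / (p - 1) := by
      rw [hm]; field_simp; ring
    rw [h1, lt_div_iff₀ hp1]; linarith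
  set β : ℝ := (α - 1) * m + 1 with hβdef
  have hβ : 0 < β := by linarith
  set e : ℝ := γ * (p / l) + (α - 1) * (-((p - l) / l)) + β * (p - 1) with hedef
  set A : ℝ := C ^ (p / l) * C' ^ (-((p - l) / l)) * ((C' ^ m) ^ (p - 1) / β ^ (p - 1))
    with hAdef
  have hA : 0 < A := by
    apply mul_pos (mul_pos (Real.rpow_pos_of_pos hC _) (Real.rpow_pos_of_pos hC' _))
    exact div_pos (Real.rpow_pos_of_pos (Real.rpow_pos_of_pos hC' _) _)
      (Real.rpow_pos_of_pos hβ _)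
  -- pointwise identification of the integrand on Ioc 0 r
  have key : ∀ t ∈ Ioc (0:ℝ) r,
      ENNReal.ofReal (C * t ^ γ) ^ (p / l) *
          ENNReal.ofReal (C' * t ^ (α - 1)) ^ (-((p - l) / l)) *
        (∫⁻ σ in Set.Ioc (0:ℝ) t,
            ENNReal.ofReal (C' * σ ^ (α - 1)) ^ (-(1 / (p - 1)))) ^ (p - 1)
      = ENNReal.ofReal (A * t ^ e) := by
    intro t ht
    have ht0 : 0 < t := ht.1
    -- inner integral
    have hinner : (∫⁻ σ in Set.Ioc (0:ℝ) t,
        ENNReal.ofReal (C' * σ ^ (α - 1)) ^ (-(1 / (p - 1))))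
        = ENNReal.ofReal (C' ^ m * (t ^ β / β)) := by
      have hcongr : ∀ σ ∈ Ioc (0:ℝ) t,
          ENNReal.ofReal (C' * σ ^ (α - 1)) ^ (-(1 / (p - 1)))
            = ENNReal.ofReal (C' ^ m * σ ^ ((α - 1) * m)) := by
        intro σ hσ
        rw [ENNReal.ofReal_rpow_of_pos (mul_pos hC' (Real.rpow_pos_of_pos hσ.1 _)),
          ← hm, Real.mul_rpow hC'.le (Real.rpow_nonneg hσ.1.le _),
          ← Real.rpow_mul hσ.1.le]
      rw [setLIntegral_congr_fun measurableSet_Ioc hcongr,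
        BDK_aux_inner _ _ _ (Real.rpow_pos_of_pos hC' m) heinner ht0, ← hβdef]
    rw [hinner,
      ENNReal.ofReal_rpow_of_pos (mul_pos hC (Real.rpow_pos_of_pos ht0 _)),
      ENNReal.ofReal_rpow_of_pos (mul_pos hC' (Real.rpow_pos_of_pos ht0 _)),
      ENNReal.ofReal_rpow_of_pos (mul_pos (Real.rpow_pos_of_pos hC' _)
        (div_pos (Real.rpow_pos_of_pos ht0 _) hβ)),
      ← ENNReal.ofReal_mul (Real.rpow_nonneg (mul_pos hC
        (Real.rpow_pos_of_pos ht0 _)).le _),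
      ← ENNReal.ofReal_mul (mul_nonneg (Real.rpow_nonneg (mul_pos hC
        (Real.rpow_pos_of_pos ht0 _)).le _) (Real.rpow_nonneg (mul_pos hC'
        (Real.rpow_pos_of_pos ht0 _)).le _))]
    congr 1
    rw [Real.mul_rpow hC.le (Real.rpow_nonneg ht0.le _),
      Real.mul_rpow hC'.le (Real.rpow_nonneg ht0.le _),
      Real.mul_rpow (Real.rpow_nonneg hC'.le _)
        (div_nonneg (Real.rpow_nonneg ht0.le _) hβ.le),
      Real.div_rpow (Real.rpow_nonneg ht0.le _) hβ.le,
      ← Real.rpow_mul ht0.le, ← Real.rpow_mul ht0.le, ← Real.rpow_mul ht0.le,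
      hedef, Real.rpow_add ht0, Real.rpow_add ht0]
    ring
  -- rewrite the BDK expression
  rw [BDK, setLIntegral_congr_fun measurableSet_Ioc key]
  have hsplit : ∀ t : ℝ, ENNReal.ofReal (A * t ^ e)
      = ENNReal.ofReal A * ENNReal.ofReal (t ^ e) := fun t => ENNReal.ofReal_mul hA.le
  simp_rw [hsplit]
  rw [lintegral_const_mul' _ _ ENNReal.ofReal_ne_top]
  -- finiteness analysis
  have hc0 : ENNReal.ofReal (((p - l) / p) ^ ((p - l) / p)) ≠ 0 := by
    simp only [ne_eq, ENNReal.ofReal_eq_zero, not_le]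
    exact Real.rpow_pos_of_pos (div_pos hpl hp0) _
  have hA0 : ENNReal.ofReal A ≠ 0 := by
    simp only [ne_eq, ENNReal.ofReal_eq_zero, not_le]; exact hA
  have step1 : (ENNReal.ofReal (((p - l) / p) ^ ((p - l) / p)) *
      (ENNReal.ofReal A * ∫⁻ t in Ioc (0:ℝ) r, ENNReal.ofReal (t ^ e)) ^ (l / p) < ⊤)
      ↔ (∫⁻ t in Ioc (0:ℝ) r, ENNReal.ofReal (t ^ e)) < ⊤ := by
    rw [ENNReal.mul_lt_top_iff]
    have hlt : ENNReal.ofReal (((p - l) / p) ^ ((p - l) / p)) < ⊤ := ENNReal.ofReal_lt_top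
    rw [ENNReal.rpow_lt_top_iff_of_pos (div_pos hl0 hp0)]
    constructor
    · rintro (⟨-, h⟩ | h | h)
      · rw [ENNReal.mul_lt_top_iff] at h
        rcases h with ⟨-, h⟩ | h | h
        · exact h
        · exact absurd h hA0
        · rw [h]; exact ENNReal.zero_lt_top
      · exact absurd h hc0
      · rw [ENNReal.rpow_eq_zero_iff] at h
        rcases h with ⟨h, -⟩ | ⟨h, hneg⟩
        · rw [mul_eq_zero] at h
          rcases h with h | h
          · exact absurd h hA0
          · rw [h]; exact ENNReal.zero_lt_top
        · exact absurd hneg (not_lt.mpr (div_pos hl0 hp0).le)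
    · intro h
      exact Or.inl ⟨hlt, ENNReal.mul_lt_top ENNReal.ofReal_lt_top h⟩
  rw [step1, BDK_aux_fin _ _ hr]
  -- final arithmetic
  have hβval : β * (p - 1) = p - α := by
    rw [hβdef, hm]; field_simp; ring
  have he1 : e + 1 = (p / l) * (γ - (α - 1 - l)) := by
    rw [hedef, hβval]; field_simp; ring
  have hpl' : (0:ℝ) < p / l := div_pos hp0 hl0
  clear key step1 hsplit hA hA0 hAdef hβval hedef hβdef hm
  clear_value A e β m
  constructor
  · intro h
    have h0 : 0 < (p / l) * (γ - (α - 1 - l)) := by linarith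
    by_contra hcon
    push_neg at hcon
    have := mul_nonpos_of_nonneg_of_nonpos hpl'.le (by linarith : γ - (α - 1 - l) ≤ 0)
    linarith
  · intro h
    have := mul_pos hpl' (by linarith : (0:ℝ) < γ - (α - 1 - l))
    linarith
end

section
/- (Explicit value of the Beesack–Das constant for equal power weights) Let 1 < p < ∞, 0 < l < p, α < p, C > 0, C' > 0, and set q(t) := C t^{α−1} and v(t) := C' t^{α−1} for t > 0. Then K(0,1,q,v) = ((p−l)/p)^{(p−l)/p} · (C/C') · ((p−1)/(p−α))^{(p−1)l/p} · p^{−l/p}. In particular K(0,1,q,v) ≤ 1 if and only if C ≤ C' · p^{1+(l−1)/p} (p−α)^{(p−1)l/p} / ( ((p−l)/p)^{(p−l)/p} p^{1+(l−1)/p−l/p} (p−1)^{(p−1)l/p} ) — i.e., if and only if C ((p−l)/p)^{(p−l)/p} ((p−1)/(p−α))^{(p−1)l/p} p^{−l/p} ≤ C'. -/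
open MeasureTheory Set Filter
open scoped ENNReal

/-!
Both integrals are integrals of pure powers. The inner one is
`C'^{-1/(p-1)} t^m / m` with `m = (p-α)/(p-1)`, and because `q` and `v` carry the same exponent
`α - 1`, the outer integrand collapses to a constant multiple of `t^{p-1}`, whose integral over
`(0,1]` is that constant divided by `p`. The resulting identity between constants is checked
after taking logarithms.
-/

lemma setLIntegral_Ioc_zero_ofReal_mul_rpow {c b t : ℝ} (hc : 0 ≤ c) (hb : -1 < b) (ht : 0 ≤ t) :
    ∫⁻ σ in Ioc 0 t, ENNReal.ofReal (c * σ ^ b) = ENNReal.ofReal (c / (b + 1) * t ^ (b + 1)) := by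
  rw [← ofReal_integral_eq_lintegral_ofReal, ← intervalIntegral.integral_of_le ht,
    intervalIntegral.integral_const_mul, integral_rpow (Or.inl hb),
    Real.zero_rpow (by linarith), sub_zero, ← mul_div_assoc, mul_div_right_comm]
  · exact ((intervalIntegral.intervalIntegrable_rpow' hb).const_mul c).1
  · filter_upwards [ae_restrict_mem measurableSet_Ioc] with σ hσ
    exact mul_nonneg hc (Real.rpow_nonneg hσ.1.le _)

lemma ofReal_mul_rpow_rpow {c t : ℝ} (a e : ℝ) (hc : 0 < c) (ht : 0 < t) :
    ENNReal.ofReal (c * t ^ a) ^ e = ENNReal.ofReal (c ^ e * t ^ (a * e)) := by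
  rw [ENNReal.ofReal_rpow_of_pos (by positivity), Real.mul_rpow hc.le (by positivity),
    Real.rpow_mul ht.le]

lemma ofReal_mul_rpow_mul_ofReal_mul_rpow {a b t : ℝ} (x y : ℝ) (ha : 0 ≤ a) (ht : 0 < t) :
    ENNReal.ofReal (a * t ^ x) * ENNReal.ofReal (b * t ^ y) =
      ENNReal.ofReal (a * b * t ^ (x + y)) := by
  rw [← ENNReal.ofReal_mul (by positivity), Real.rpow_add ht]
  ring_nf

lemma setLIntegral_Ioc_zero_ofReal_mul_rpow_rpow {c a e t : ℝ} (hc : 0 < c) (hae : -1 < a * e)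
    (ht : 0 ≤ t) :
    ∫⁻ σ in Ioc 0 t, ENNReal.ofReal (c * σ ^ a) ^ e =
      ENNReal.ofReal (c ^ e / (a * e + 1) * t ^ (a * e + 1)) := by
  rw [setLIntegral_congr_fun measurableSet_Ioc fun σ hσ => ofReal_mul_rpow_rpow a e hc hσ.1]
  exact setLIntegral_Ioc_zero_ofReal_mul_rpow (by positivity) hae ht

section EqualPowerWeights

variable {p l α C C' : ℝ}

lemma BDK_inner_integral_power_weight (hp : 1 < p) (hαp : α < p) (hC' : 0 < C') {t : ℝ}
    (ht : 0 ≤ t) :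
    ∫⁻ σ in Ioc 0 t, ENNReal.ofReal (C' * σ ^ (α - 1)) ^ (-(1 / (p - 1))) =
      ENNReal.ofReal (C' ^ (-(1 / (p - 1))) / ((p - α) / (p - 1)) * t ^ ((p - α) / (p - 1))) := by
  have hm : 0 < (p - α) / (p - 1) := div_pos (by linarith) (by linarith)
  have hexp : (α - 1) * -(1 / (p - 1)) + 1 = (p - α) / (p - 1) := by
    field_simp [show p - 1 ≠ 0 by linarith]; ring
  rw [setLIntegral_Ioc_zero_ofReal_mul_rpow_rpow hC' (by linarith) ht, hexp]

lemma BDK_equal_power_weights_eq (hp : 1 < p) (hl0 : 0 < l) (hαp : α < p) (hC : 0 < C)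
    (hC' : 0 < C') :
    BDK p l (fun t => C * t ^ (α - 1)) (fun t => C' * t ^ (α - 1)) 0 (Ioc 0 1) =
      ENNReal.ofReal (((p - l) / p) ^ ((p - l) / p)) *
        ENNReal.ofReal (C ^ (p / l) * C' ^ (-((p - l) / l)) *
          (C' ^ (-(1 / (p - 1))) / ((p - α) / (p - 1))) ^ (p - 1) / p) ^ (l / p) := by
  have hm : 0 < (p - α) / (p - 1) := div_pos (by linarith) (by linarith)
  have hexp : (α - 1) * (p / l) + (α - 1) * -((p - l) / l) + (p - α) / (p - 1) * (p - 1) =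
      p - 1 := by
    field_simp [show p - 1 ≠ 0 by linarith]; ring
  have hintegrand : ∀ t ∈ Ioc (0 : ℝ) 1,
      ENNReal.ofReal (C * t ^ (α - 1)) ^ (p / l) *
        ENNReal.ofReal (C' * t ^ (α - 1)) ^ (-((p - l) / l)) *
        (∫⁻ σ in Ioc 0 t, ENNReal.ofReal (C' * σ ^ (α - 1)) ^ (-(1 / (p - 1)))) ^ (p - 1) =
      ENNReal.ofReal (C ^ (p / l) * C' ^ (-((p - l) / l)) *
        (C' ^ (-(1 / (p - 1))) / ((p - α) / (p - 1))) ^ (p - 1) * t ^ (p - 1)) := by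
    rintro t ⟨ht, -⟩
    rw [BDK_inner_integral_power_weight hp hαp hC' ht.le, ofReal_mul_rpow_rpow _ _ hC ht,
      ofReal_mul_rpow_rpow _ _ hC' ht, ofReal_mul_rpow_rpow _ _ (div_pos (Real.rpow_pos_of_pos hC' _) hm) ht,
      ofReal_mul_rpow_mul_ofReal_mul_rpow _ _ (by positivity) ht,
      ofReal_mul_rpow_mul_ofReal_mul_rpow _ _ (by positivity) ht, hexp]
  rw [BDK, setLIntegral_congr_fun measurableSet_Ioc hintegrand,
    setLIntegral_Ioc_zero_ofReal_mul_rpow (by positivity) (by linarith) zero_le_one,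
    Real.one_rpow, mul_one, sub_add_cancel]

end EqualPowerWeights

/-- **Explicit value of the Beesack–Das constant for equal power weights**:
for `q(t) = C t^{α-1}` and `v(t) = C' t^{α-1}`,
`K(0,1,q,v) = ((p-l)/p)^{(p-l)/p} (C/C') ((p-1)/(p-α))^{(p-1)l/p} p^{-l/p}`,
and `K(0,1,q,v) ≤ 1` iff `C ((p-l)/p)^{(p-l)/p} ((p-1)/(p-α))^{(p-1)l/p} p^{-l/p} ≤ C'`. -/
theorem BDK_equal_power_weights_value
    (p l α C C' : ℝ)
    (hp : 1 < p) (hl0 : 0 < l) (hlp : l < p) (hαp : α < p)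
    (hC : 0 < C) (hC' : 0 < C') :
    BDK p l (fun t => C * t ^ (α - 1)) (fun t => C' * t ^ (α - 1)) 0 (Set.Ioc (0:ℝ) 1) =
        ENNReal.ofReal (((p - l) / p) ^ ((p - l) / p) * (C / C') *
          ((p - 1) / (p - α)) ^ ((p - 1) * l / p) * p ^ (-(l / p))) ∧
      (BDK p l (fun t => C * t ^ (α - 1)) (fun t => C' * t ^ (α - 1)) 0 (Set.Ioc (0:ℝ) 1) ≤ 1 ↔
        C * ((p - l) / p) ^ ((p - l) / p) *
          ((p - 1) / (p - α)) ^ ((p - 1) * l / p) * p ^ (-(l / p)) ≤ C') := by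
  have hp1 : 0 < p - 1 := by linarith
  have hpα : 0 < p - α := by linarith
  have hpl : 0 < p - l := by linarith
  have hval : BDK p l (fun t => C * t ^ (α - 1)) (fun t => C' * t ^ (α - 1)) 0 (Ioc 0 1) =
      ENNReal.ofReal (((p - l) / p) ^ ((p - l) / p) * (C / C') *
        ((p - 1) / (p - α)) ^ ((p - 1) * l / p) * p ^ (-(l / p))) := by
    rw [BDK_equal_power_weights_eq hp hl0 hαp hC hC', ENNReal.ofReal_rpow_of_pos (by positivity),
      ← ENNReal.ofReal_mul (by positivity)]
    congr 1
    refine Real.log_injOn_pos (by simp only [mem_Ioi]; positivity)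
      (by simp only [mem_Ioi]; positivity) ?_
    simp (disch := positivity) only [Real.log_rpow, Real.log_mul, Real.log_div]
    field_simp
    ring
  refine ⟨hval, ?_⟩
  rw [hval, ENNReal.ofReal_le_one, ← div_le_one hC']
  exact iff_of_eq (congrArg (· ≤ (1 : ℝ)) (by ring))
end
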